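/- arXiv:2112.03244 — 6 statements merged into one kernel-verified Lean document; each statement's English description precedes it below -/
import Mathlib

section
/- Let u solve the neural field Cauchy problem u' = N(·,u), u(t₀) = u₀, and u_n solve the projected problem u_n' = P_n N(·, u_n), u_n(t₀) = P_n u₀, on J = [t₀, t₀+T]. Then ‖u − u_n‖_{C(J,X)} ≤ e^{β_n} ‖u − P_n u‖_{C(J,X)}, where β_n = T ‖P_n W‖ ‖f'‖_∞. -/
/-!
Since `un` starts in the range of the idempotent `P` and its velocity lies there, it never
leaves it. Hence `d = P u - un` solves `d' = -d + P W (F u - F un)` with `d t₀ = 0`, and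
`‖u - un‖ ≤ ‖u - P u‖ + ‖d‖ ≤ M + ‖d‖`. Grönwall applied to `exp (t - t₀) • d` gives
`‖d t‖ ≤ M (exp (K (t - t₀)) - 1)` with `K = ‖P W‖ Lf`, whence `‖u - un‖ ≤ M exp (K T)`.
-/

open Set Real

section

variable {E : Type*} [NormedAddCommGroup E] [NormedSpace ℝ E]

theorem IsIdempotentElem.apply_eq_self_of_hasDerivWithinAt {P : E →L[ℝ] E}
    (hP : IsIdempotentElem P) {v w : ℝ → E} {a b : ℝ}
    (hv : ∀ t ∈ Icc a b, HasDerivWithinAt v (P (w t)) (Icc a b) t) (ha : P (v a) = v a) :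
    ∀ t ∈ Icc a b, P (v t) = v t := by
  have hPP : ∀ x, P (P x) = P x := fun x => congrArg (fun Q : E →L[ℝ] E => Q x) hP.eq
  have hderiv : ∀ t ∈ Icc a b,
      HasDerivWithinAt (fun τ => P (v τ) - v τ) 0 (Icc a b) t := fun t ht => by
    have h := (P.hasFDerivAt.comp_hasDerivWithinAt t (hv t ht)).sub (hv t ht)
    rwa [hPP, sub_self] at h
  have hconst := constant_of_has_deriv_right_zero
    (fun t ht => (hderiv t ht).continuousWithinAt)
    (fun t ht => (hderiv t (Ico_subset_Icc_self ht)).mono_of_mem_nhdsWithin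
      (Icc_mem_nhdsGE_of_mem ht))
  intro t ht
  simpa [ha, sub_eq_zero] using hconst t ht

theorem gronwallBound_zero_mul_left (K c x : ℝ) :
    gronwallBound 0 K (K * c) x = c * (exp (K * x) - 1) := by
  rcases eq_or_ne K 0 with rfl | hK
  · simp [gronwallBound_K0]
  · rw [gronwallBound_of_K_ne_0 hK]
    field_simp
    ring

theorem hasDerivWithinAt_exp_sub_smul_of_neg_add {d : ℝ → E} {r : E} {s : Set ℝ} {a t : ℝ}
    (hd : HasDerivWithinAt d (-d t + r) s t) :
    HasDerivWithinAt (fun τ => exp (τ - a) • d τ) (exp (t - a) • r) s t := by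
  have hexp : HasDerivWithinAt (fun τ => exp (τ - a)) (exp (t - a)) s t := by
    simpa using ((hasDerivAt_id t).sub_const a).exp.hasDerivWithinAt
  have h := hexp.smul hd
  have heq : exp (t - a) • (-d t + r) + exp (t - a) • d t = exp (t - a) • r := by
    rw [smul_add, smul_neg]
    abel
  rwa [heq] at h

/-- The forcing term `K M exp (τ - a)` of the Grönwall inequality for `exp (τ - a) • d` is
bounded on `[a, t]` by its value at `t`. -/
theorem norm_le_of_hasDerivWithinAt_neg_add {d r : ℝ → E} {a b K M : ℝ} (hK : 0 ≤ K)
    (hM : 0 ≤ M) (hd : ∀ t ∈ Icc a b, HasDerivWithinAt d (-d t + r t) (Icc a b) t)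
    (ha : d a = 0) (hr : ∀ t ∈ Icc a b, ‖r t‖ ≤ K * (M + ‖d t‖)) :
    ∀ t ∈ Icc a b, ‖d t‖ ≤ M * (exp (K * (t - a)) - 1) := by
  intro t ht
  set g : ℝ → E := fun τ => exp (τ - a) • d τ
  have hg : ∀ τ ∈ Icc a b, HasDerivWithinAt g (exp (τ - a) • r τ) (Icc a b) τ :=
    fun τ hτ => hasDerivWithinAt_exp_sub_smul_of_neg_add (hd τ hτ)
  have hsub : Icc a t ⊆ Icc a b := Icc_subset_Icc_right ht.2
  have hnorm_g : ∀ τ, ‖g τ‖ = exp (τ - a) * ‖d τ‖ := fun τ => by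
    simp [g, norm_smul, abs_of_pos (exp_pos _)]
  have hbound : ∀ τ ∈ Ico a t,
      ‖exp (τ - a) • r τ‖ ≤ K * ‖g τ‖ + K * (M * exp (t - a)) := fun τ hτ => by
    have hτ' := hsub (Ico_subset_Icc_self hτ)
    have hexp : exp (τ - a) ≤ exp (t - a) := exp_le_exp.2 (by linarith [hτ.2])
    rw [norm_smul, Real.norm_of_nonneg (exp_pos _).le, hnorm_g]
    nlinarith [mul_le_mul_of_nonneg_left (hr τ hτ') (exp_pos (τ - a)).le,
      mul_le_mul_of_nonneg_left hexp (mul_nonneg hK hM)]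
  have hgron := norm_le_gronwallBound_of_norm_deriv_right_le (δ := 0)
    (fun τ hτ => (hg τ (hsub hτ)).continuousWithinAt.mono hsub)
    (fun τ hτ => (hg τ (hsub (Ico_subset_Icc_self hτ))).mono_of_mem_nhdsWithin
      (Icc_mem_nhdsGE_of_mem ⟨hτ.1, hτ.2.trans_le ht.2⟩))
    (by simp [g, ha]) hbound t (right_mem_Icc.2 ht.1)
  rw [gronwallBound_zero_mul_left, hnorm_g] at hgron
  have : exp (t - a) * ‖d t‖ ≤ exp (t - a) * (M * (exp (K * (t - a)) - 1)) := by linarith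
  exact le_of_mul_le_mul_left this (exp_pos _)

end

theorem projection_scheme_upper_bound_general
    {X : Type*} [NormedAddCommGroup X] [NormedSpace ℝ X]
    (W : X →L[ℝ] X) (F : X → X) (Lf : NNReal) (hFlip : LipschitzWith Lf F)
    (ξ : ℝ → X)
    (t₀ T : ℝ) (u₀ : X)
    (P : X →L[ℝ] X) (hidem : P.comp P = P)
    (u un : ℝ → X)
    (hu0 : u t₀ = u₀) (hun0 : un t₀ = P u₀)
    (hu : ∀ t ∈ Set.Icc t₀ (t₀ + T),
      HasDerivWithinAt u (-u t + W (F (u t)) + ξ t) (Set.Icc t₀ (t₀ + T)) t)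
    (hun : ∀ t ∈ Set.Icc t₀ (t₀ + T),
      HasDerivWithinAt un (P (-un t + W (F (un t)) + ξ t)) (Set.Icc t₀ (t₀ + T)) t)
    (M : ℝ) (hM : ∀ t ∈ Set.Icc t₀ (t₀ + T), ‖u t - P (u t)‖ ≤ M) :
    ∀ t ∈ Set.Icc t₀ (t₀ + T),
      ‖u t - un t‖ ≤ Real.exp (T * ‖P.comp W‖ * Lf) * M := by
  intro t ht
  set K : ℝ := ‖P.comp W‖ * Lf
  have hK : 0 ≤ K := by positivity
  have hM₀ : 0 ≤ M := (norm_nonneg _).trans (hM t ht)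
  have hPu₀ : P (P u₀) = P u₀ := congrArg (fun Q : X →L[ℝ] X => Q u₀) hidem
  have hrange :=
    IsIdempotentElem.apply_eq_self_of_hasDerivWithinAt hidem hun (by rw [hun0, hPu₀])
  have hsplit : ∀ s ∈ Icc t₀ (t₀ + T), ‖u s - un s‖ ≤ M + ‖P (u s) - un s‖ := fun s hs =>
    calc ‖u s - un s‖ = ‖(u s - P (u s)) + (P (u s) - un s)‖ := by rw [sub_add_sub_cancel]
      _ ≤ M + ‖P (u s) - un s‖ := (norm_add_le _ _).trans (by linarith [hM s hs])
  have herr : ∀ s ∈ Icc t₀ (t₀ + T), HasDerivWithinAt (fun τ => P (u τ) - un τ)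
      (-(P (u s) - un s) + (P.comp W (F (u s)) - P.comp W (F (un s)))) (Icc t₀ (t₀ + T)) s := by
    intro s hs
    refine ((P.hasFDerivAt.comp_hasDerivWithinAt s (hu s hs)).sub (hun s hs)).congr_deriv ?_
    simp only [map_add, map_neg, ContinuousLinearMap.comp_apply, hrange s hs]
    abel
  have hforce : ∀ s ∈ Icc t₀ (t₀ + T),
      ‖P.comp W (F (u s)) - P.comp W (F (un s))‖ ≤ K * (M + ‖P (u s) - un s‖) := by
    intro s hs
    calc _ ≤ K * ‖u s - un s‖ := by
          simpa [K] using ((P.comp W).lipschitz.comp hFlip).norm_sub_le (u s) (un s)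
      _ ≤ K * (M + ‖P (u s) - un s‖) := by gcongr; exact hsplit s hs
  have hd := norm_le_of_hasDerivWithinAt_neg_add hK hM₀ herr (by simp [hu0, hun0]) hforce t ht
  have hKt : K * (t - t₀) ≤ T * ‖P.comp W‖ * Lf := by nlinarith [ht.1, ht.2]
  calc ‖u t - un t‖ ≤ M * exp (K * (t - t₀)) := by linarith [hsplit t ht]
    _ ≤ M * exp (T * ‖P.comp W‖ * Lf) := by gcongr
    _ = exp (T * ‖P.comp W‖ * Lf) * M := mul_comm _ _

/-- Upper sandwich bound: `‖u - u_n‖_{C(J,X)} ≤ e^{β_n} ‖u - P_n u‖_{C(J,X)}`,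
where `β_n = T ‖P_n W‖ ‖f'‖_∞`. -/
theorem projection_scheme_upper_bound
    {X : Type*} [NormedAddCommGroup X] [NormedSpace ℝ X] [CompleteSpace X]
    (W : X →L[ℝ] X) (F : X → X) (Lf : NNReal) (hFlip : LipschitzWith Lf F)
    (ξ : ℝ → X) (hξ : Continuous ξ)
    (t₀ T : ℝ) (hT : 0 ≤ T) (u₀ : X)
    (P : X →L[ℝ] X) (hidem : P.comp P = P)
    (u un : ℝ → X)
    (hu0 : u t₀ = u₀) (hun0 : un t₀ = P u₀)
    (hu : ∀ t ∈ Set.Icc t₀ (t₀ + T),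
      HasDerivWithinAt u (-u t + W (F (u t)) + ξ t) (Set.Icc t₀ (t₀ + T)) t)
    (hun : ∀ t ∈ Set.Icc t₀ (t₀ + T),
      HasDerivWithinAt un (P (-un t + W (F (un t)) + ξ t)) (Set.Icc t₀ (t₀ + T)) t)
    (M : ℝ) (hM : ∀ t ∈ Set.Icc t₀ (t₀ + T), ‖u t - P (u t)‖ ≤ M) :
    ∀ t ∈ Set.Icc t₀ (t₀ + T),
      ‖u t - un t‖ ≤ Real.exp (T * ‖P.comp W‖ * Lf) * M :=
  projection_scheme_upper_bound_general W F Lf hFlip ξ t₀ T u₀ P hidem u un hu0 hun0 hu hun M hM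
end

section
/- Under the same hypotheses, the reverse bound holds: ‖u − P_n u‖_{C(J,X)} ≤ (1 + β_n) ‖u − u_n‖_{C(J,X)}, where β_n = T ‖P_n W‖ ‖f'‖_∞. -/
/-!
Since `P` is idempotent and `u_n(t₀) = P u₀`, the discrete solution stays in the range of `P`,
so `v = P u - u_n` solves `v' = -v + P W (F u - F u_n)` with `v(t₀) = 0`. The forcing term is
bounded by `‖P W‖ ‖f'‖_∞ M`, and thanks to the damping `-v` it cannot accumulate faster than
linearly in time, whence `‖v(t)‖ ≤ T ‖P W‖ ‖f'‖_∞ M`. Finally `u - P u = (u - u_n) - v`.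
-/

open Set

section

variable {E : Type*} [NormedAddCommGroup E] [NormedSpace ℝ E]

theorem ContinuousLinearMap.apply_eq_self_of_hasDerivWithinAt {P : E →L[ℝ] E}
    (hP : P.comp P = P) {s : Set ℝ} (hs : Convex ℝ s) {w w' : ℝ → E}
    (hw : ∀ t ∈ s, HasDerivWithinAt w (P (w' t)) s t) {a : ℝ} (ha : a ∈ s)
    (h₀ : P (w a) = w a) {t : ℝ} (ht : t ∈ s) : P (w t) = w t := by
  have hPP : ∀ x, P (P x) = P x := fun x => by rw [← ContinuousLinearMap.comp_apply, hP]
  have hderiv : ∀ r ∈ s, HasDerivWithinAt (fun r => P (w r) - w r) 0 s r := fun r hr => by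
    simpa only [Function.comp_def, hPP, sub_self] using
      (P.hasFDerivAt.comp_hasDerivWithinAt r (hw r hr)).fun_sub (hw r hr)
  have := hs.norm_image_sub_le_of_norm_hasDerivWithin_le hderiv (fun _ _ => norm_zero.le) ha ht
  rwa [zero_mul, h₀, sub_self, sub_zero, norm_le_zero_iff, sub_eq_zero] at this

/-- The weight `eˢ` turns the equation into `(eˢ v)' = eˢ G`, whose right side is at most `eᵇ K`
on `[a, b]`; the mean value inequality then gives `eᵇ ‖v b‖ ≤ eᵇ K (b - a)`. -/
theorem norm_le_mul_of_hasDerivWithinAt_neg_add {v G : ℝ → E} {a b K : ℝ} (hab : a ≤ b)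
    (hv : ∀ s ∈ Icc a b, HasDerivWithinAt v (-v s + G s) (Icc a b) s) (hva : v a = 0)
    (hG : ∀ s ∈ Icc a b, ‖G s‖ ≤ K) : ‖v b‖ ≤ K * (b - a) := by
  have ha : a ∈ Icc a b := left_mem_Icc.2 hab
  have hb : b ∈ Icc a b := right_mem_Icc.2 hab
  have hweighted : ∀ s ∈ Icc a b,
      HasDerivWithinAt (fun r => Real.exp r • v r) (Real.exp s • G s) (Icc a b) s := fun s hs => by
    convert (Real.hasDerivAt_exp s).hasDerivWithinAt.fun_smul (hv s hs) using 1
    rw [smul_add, smul_neg]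
    abel
  have hbound : ∀ s ∈ Icc a b, ‖Real.exp s • G s‖ ≤ Real.exp b * K := fun s hs => by
    rw [norm_smul, Real.norm_of_nonneg (Real.exp_pos s).le]
    exact mul_le_mul (Real.exp_le_exp.2 hs.2) (hG s hs) (norm_nonneg _) (Real.exp_pos b).le
  have := (convex_Icc a b).norm_image_sub_le_of_norm_hasDerivWithin_le hweighted hbound ha hb
  rw [hva, smul_zero, sub_zero, norm_smul, Real.norm_of_nonneg (Real.exp_pos b).le,
    Real.norm_of_nonneg (sub_nonneg.2 hab), mul_assoc] at this
  exact le_of_mul_le_mul_left this (Real.exp_pos b)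

end

theorem projection_scheme_lower_bound_general
    {X : Type*} [NormedAddCommGroup X] [NormedSpace ℝ X]
    (W : X →L[ℝ] X) (F : X → X) (Lf : NNReal) (hFlip : LipschitzWith Lf F)
    (ξ : ℝ → X)
    (t₀ T : ℝ) (u₀ : X)
    (P : X →L[ℝ] X) (hidem : P.comp P = P)
    (u un : ℝ → X)
    (hu0 : u t₀ = u₀) (hun0 : un t₀ = P u₀)
    (hu : ∀ t ∈ Set.Icc t₀ (t₀ + T),
      HasDerivWithinAt u (-u t + W (F (u t)) + ξ t) (Set.Icc t₀ (t₀ + T)) t)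
    (hun : ∀ t ∈ Set.Icc t₀ (t₀ + T),
      HasDerivWithinAt un (P (-un t + W (F (un t)) + ξ t)) (Set.Icc t₀ (t₀ + T)) t)
    (M : ℝ) (hM : ∀ t ∈ Set.Icc t₀ (t₀ + T), ‖u t - un t‖ ≤ M) :
    ∀ t ∈ Set.Icc t₀ (t₀ + T),
      ‖u t - P (u t)‖ ≤ (1 + T * ‖P.comp W‖ * Lf) * M := by
  intro t ht
  have hsub : Icc t₀ t ⊆ Icc t₀ (t₀ + T) := Icc_subset_Icc le_rfl ht.2
  have hPun : ∀ s ∈ Icc t₀ (t₀ + T), P (un s) = un s := fun s hs =>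
    P.apply_eq_self_of_hasDerivWithinAt hidem (convex_Icc _ _) hun (hsub (left_mem_Icc.2 ht.1))
      (by rw [hun0, ← ContinuousLinearMap.comp_apply, hidem]) hs
  have herror : ∀ s ∈ Icc t₀ t, HasDerivWithinAt (fun r => P (u r) - un r)
      (-(P (u s) - un s) + P.comp W (F (u s) - F (un s))) (Icc t₀ t) s := fun s hs => by
    refine (((P.hasFDerivAt.comp_hasDerivWithinAt s (hu s (hsub hs))).sub
      (hun s (hsub hs))).mono hsub).congr_deriv ?_
    simp only [map_add, map_neg, ContinuousLinearMap.comp_apply, map_sub, hPun s (hsub hs)]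
    abel
  have hforcing : ∀ s ∈ Icc t₀ t, ‖P.comp W (F (u s) - F (un s))‖ ≤ ‖P.comp W‖ * Lf * M :=
    fun s hs => calc
      _ ≤ ‖P.comp W‖ * ‖F (u s) - F (un s)‖ := (P.comp W).le_opNorm _
      _ ≤ ‖P.comp W‖ * (Lf * M) := by
        gcongr
        exact hFlip.norm_sub_le_of_le (hM s (hsub hs))
      _ = ‖P.comp W‖ * Lf * M := by ring
  have hv := norm_le_mul_of_hasDerivWithinAt_neg_add ht.1 herror
    (by rw [hu0, hun0, sub_self]) hforcing
  have hM0 : 0 ≤ M := (norm_nonneg _).trans (hM t ht)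
  calc ‖u t - P (u t)‖ = ‖(u t - un t) - (P (u t) - un t)‖ := by rw [sub_sub_sub_cancel_right]
    _ ≤ M + ‖P.comp W‖ * Lf * M * (t - t₀) := (norm_sub_le _ _).trans (add_le_add (hM t ht) hv)
    _ ≤ (1 + T * ‖P.comp W‖ * Lf) * M := by
      have : ‖P.comp W‖ * Lf * M * (t - t₀) ≤ ‖P.comp W‖ * Lf * M * T :=
        mul_le_mul_of_nonneg_left (by linarith [ht.2]) (by positivity)
      linarith

/-- Lower sandwich bound: `‖u - P_n u‖_{C(J,X)} ≤ (1 + β_n) ‖u - u_n‖_{C(J,X)}`,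
where `β_n = T ‖P_n W‖ ‖f'‖_∞`. -/
theorem projection_scheme_lower_bound
    {X : Type*} [NormedAddCommGroup X] [NormedSpace ℝ X] [CompleteSpace X]
    (W : X →L[ℝ] X) (F : X → X) (Lf : NNReal) (hFlip : LipschitzWith Lf F)
    (ξ : ℝ → X) (hξ : Continuous ξ)
    (t₀ T : ℝ) (hT : 0 ≤ T) (u₀ : X)
    (P : X →L[ℝ] X) (hidem : P.comp P = P)
    (u un : ℝ → X)
    (hu0 : u t₀ = u₀) (hun0 : un t₀ = P u₀)
    (hu : ∀ t ∈ Set.Icc t₀ (t₀ + T),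
      HasDerivWithinAt u (-u t + W (F (u t)) + ξ t) (Set.Icc t₀ (t₀ + T)) t)
    (hun : ∀ t ∈ Set.Icc t₀ (t₀ + T),
      HasDerivWithinAt un (P (-un t + W (F (un t)) + ξ t)) (Set.Icc t₀ (t₀ + T)) t)
    (M : ℝ) (hM : ∀ t ∈ Set.Icc t₀ (t₀ + T), ‖u t - un t‖ ≤ M) :
    ∀ t ∈ Set.Icc t₀ (t₀ + T),
      ‖u t - P (u t)‖ ≤ (1 + T * ‖P.comp W‖ * Lf) * M :=
  projection_scheme_lower_bound_general W F Lf hFlip ξ t₀ T u₀ P hidem u un hu0 hun0 hu hun M hM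
end

section
/- Under the same hypotheses, ‖u − P_n u‖_{C(J,X)} ≤ α_n, where α_n = ‖u₀ − P_n u₀‖ + T ‖f‖_∞ ‖W − P_n W‖ + T ‖ξ − P_n ξ‖_{C(J,X)}. -/
/-!
The defect `v = u - P u` solves the damped equation `v' = -v + g` with
`g = (W - P W) F(u) + (ξ - P ξ)`, and `‖g‖ ≤ ‖W - P W‖ Mf + Mξ =: C`. The weighted function
`eᵗ v` has derivative `eᵗ g`, so comparing with `eᵗ⁰ ‖v t₀‖ + C (eᵗ - eᵗ⁰)` gives
`‖v t‖ ≤ e^{t₀-t} ‖v t₀‖ + C (1 - e^{t₀-t}) ≤ ‖v t₀‖ + C (t - t₀)`.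
-/

open Set Real

section DampedEquation

variable {E : Type*} [NormedAddCommGroup E] [NormedSpace ℝ E]
  {v g : ℝ → E} {a b C : ℝ}

theorem norm_le_of_hasDerivWithinAt_neg_add_of_norm_le
    (hv : ∀ t ∈ Icc a b, HasDerivWithinAt v (-v t + g t) (Icc a b) t)
    (hg : ∀ t ∈ Ico a b, ‖g t‖ ≤ C) :
    ∀ t ∈ Icc a b, ‖v t‖ ≤ exp (a - t) * ‖v a‖ + C * (1 - exp (a - t)) := by
  have hw : ∀ t ∈ Ico a b, HasDerivWithinAt (fun s ↦ exp s • v s) (exp t • g t) (Ici t) t := by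
    intro t ht
    have hvt := (hv t (Ico_subset_Icc_self ht)).mono_of_mem_nhdsWithin
      (Filter.mem_of_superset (Icc_mem_nhdsGE ht.2) (Icc_subset_Icc_left ht.1))
    convert (hasDerivAt_exp t).hasDerivWithinAt.smul hvt using 1
    · rfl
    rw [smul_add, smul_neg]
    abel
  have hB : ∀ t, HasDerivAt (fun s ↦ exp a * ‖v a‖ + C * (exp s - exp a)) (C * exp t) t :=
    fun t ↦ (((hasDerivAt_exp t).sub_const _).const_mul C).const_add _
  have hbound : ∀ t ∈ Ico a b, ‖exp t • g t‖ ≤ C * exp t := fun t ht ↦ by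
    rw [norm_smul, norm_of_nonneg (exp_pos t).le, mul_comm]
    exact mul_le_mul_of_nonneg_right (hg t ht) (exp_pos t).le
  intro t ht
  have key := image_norm_le_of_norm_deriv_right_le_deriv_boundary
    (continuous_exp.continuousOn.smul fun s hs ↦ (hv s hs).continuousWithinAt) hw
    (by simp [norm_smul]) hB hbound ht
  rw [Pi.smul_apply', norm_smul, norm_of_nonneg (exp_pos t).le,
    ← le_div_iff₀' (exp_pos t)] at key
  refine key.trans_eq ?_
  rw [exp_sub]
  field_simp

theorem norm_le_add_mul_of_hasDerivWithinAt_neg_add_of_norm_le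
    (hv : ∀ t ∈ Icc a b, HasDerivWithinAt v (-v t + g t) (Icc a b) t)
    (hg : ∀ t ∈ Ico a b, ‖g t‖ ≤ C) (hC : 0 ≤ C) :
    ∀ t ∈ Icc a b, ‖v t‖ ≤ ‖v a‖ + C * (t - a) := by
  intro t ht
  have hexp_le : exp (a - t) ≤ 1 := exp_le_one_iff.2 (by linarith [ht.1])
  have hexp_ge : 1 - (t - a) ≤ exp (a - t) := by linarith [add_one_le_exp (a - t)]
  calc ‖v t‖ ≤ exp (a - t) * ‖v a‖ + C * (1 - exp (a - t)) :=
        norm_le_of_hasDerivWithinAt_neg_add_of_norm_le hv hg t ht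
    _ ≤ ‖v a‖ + C * (t - a) :=
        add_le_add (mul_le_of_le_one_left (norm_nonneg _) hexp_le)
          (mul_le_mul_of_nonneg_left (by linarith) hC)

end DampedEquation

theorem projection_of_solution_bound_general
    {X : Type*} [NormedAddCommGroup X] [NormedSpace ℝ X]
    (W : X →L[ℝ] X) (F : X → X)
    (Mf : ℝ) (hFb : ∀ v : X, ‖F v‖ ≤ Mf)
    (ξ : ℝ → X)
    (t₀ T : ℝ) (u₀ : X)
    (P : X →L[ℝ] X)
    (u : ℝ → X) (hu0 : u t₀ = u₀)
    (hu : ∀ t ∈ Set.Icc t₀ (t₀ + T),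
      HasDerivWithinAt u (-u t + W (F (u t)) + ξ t) (Set.Icc t₀ (t₀ + T)) t)
    (Mξ : ℝ) (hMξ : ∀ t ∈ Set.Icc t₀ (t₀ + T), ‖ξ t - P (ξ t)‖ ≤ Mξ) :
    ∀ t ∈ Set.Icc t₀ (t₀ + T),
      ‖u t - P (u t)‖ ≤ ‖u₀ - P u₀‖ + T * Mf * ‖W - P.comp W‖ + T * Mξ := by
  intro t ht
  set C := ‖W - P.comp W‖ * Mf + Mξ
  have hC : 0 ≤ C := add_nonneg (mul_nonneg (norm_nonneg _) ((norm_nonneg _).trans (hFb 0)))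
    ((norm_nonneg _).trans (hMξ t ht))
  have hv : ∀ s ∈ Icc t₀ (t₀ + T), HasDerivWithinAt (fun s ↦ u s - P (u s))
      (-(u s - P (u s)) + ((W - P.comp W) (F (u s)) + (ξ s - P (ξ s)))) (Icc t₀ (t₀ + T)) s := by
    intro s hs
    convert (hu s hs).sub (P.hasFDerivAt.comp_hasDerivWithinAt s (hu s hs)) using 1
    · rfl
    simp only [map_add, map_neg, sub_apply, ContinuousLinearMap.comp_apply]
    abel
  have hg : ∀ s ∈ Ico t₀ (t₀ + T), ‖(W - P.comp W) (F (u s)) + (ξ s - P (ξ s))‖ ≤ C :=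
    fun s hs ↦ norm_add_le_of_le ((W - P.comp W).le_opNorm_of_le (hFb _))
      (hMξ s (Ico_subset_Icc_self hs))
  calc ‖u t - P (u t)‖ ≤ ‖u₀ - P u₀‖ + C * (t - t₀) :=
        hu0 ▸ norm_le_add_mul_of_hasDerivWithinAt_neg_add_of_norm_le hv hg hC t ht
    _ ≤ ‖u₀ - P u₀‖ + C * T := by gcongr; linarith [ht.2]
    _ = ‖u₀ - P u₀‖ + T * Mf * ‖W - P.comp W‖ + T * Mξ := by ring

/-- Bound `‖u - P_n u‖_{C(J,X)} ≤ α_n`, where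
`α_n = ‖u₀ - P_n u₀‖ + T ‖f‖_∞ ‖W - P_n W‖ + T ‖ξ - P_n ξ‖_{C(J,X)}`. -/
theorem projection_of_solution_bound
    {X : Type*} [NormedAddCommGroup X] [NormedSpace ℝ X] [CompleteSpace X]
    (W : X →L[ℝ] X) (F : X → X) (Lf : NNReal) (hFlip : LipschitzWith Lf F)
    (Mf : ℝ) (hFb : ∀ v : X, ‖F v‖ ≤ Mf)
    (ξ : ℝ → X) (hξ : Continuous ξ)
    (t₀ T : ℝ) (hT : 0 ≤ T) (u₀ : X)
    (P : X →L[ℝ] X) (hidem : P.comp P = P)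
    (u : ℝ → X) (hu0 : u t₀ = u₀)
    (hu : ∀ t ∈ Set.Icc t₀ (t₀ + T),
      HasDerivWithinAt u (-u t + W (F (u t)) + ξ t) (Set.Icc t₀ (t₀ + T)) t)
    (Mξ : ℝ) (hMξ : ∀ t ∈ Set.Icc t₀ (t₀ + T), ‖ξ t - P (ξ t)‖ ≤ Mξ) :
    ∀ t ∈ Set.Icc t₀ (t₀ + T),
      ‖u t - P (u t)‖ ≤ ‖u₀ - P u₀‖ + T * Mf * ‖W - P.comp W‖ + T * Mξ :=
  projection_of_solution_bound_general W F Mf hFb ξ t₀ T u₀ P u hu0 hu Mξ hMξ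
end

section
/- Assume there exist p > 0 and n₀ such that ‖P_n W‖ ≤ p for all n > n₀, and suppose P_n v → v in X for all v ∈ X. Then for every solution u of the neural field Cauchy problem, the projected solutions u_n converge to u in C(J, X), and moreover ‖u − u_n‖_{C(J,X)} and ‖u − P_n u‖_{C(J,X)} converge to 0 at exactly the same speed, in the sense that (1+β)^{-1} ‖u − P_n u‖_{C(J,X)} ≤ ‖u − u_n‖_{C(J,X)} ≤ e^β ‖u − P_n u‖_{C(J,X)} for all n > n₀ with β = pT‖f'‖_∞. -/
/-!
Write `w = P_n u - u_n`. Since `P_n` is idempotent, `u_n` stays in the range of `P_n`, and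
`w' = -w + P_n W (F u - F u_n)` with `w(t₀) = 0`. The term `-w` is dissipative, so `‖w‖` obeys
the Gronwall bound driven by `‖P_n W‖ Lf ‖u - u_n‖` alone. Splitting `u - u_n = (u - P_n u) + w`
this gives `‖u - u_n‖ ≤ e^β ‖u - P_n u‖`, and splitting `u - P_n u = (u - u_n) - w` it gives
`‖u - P_n u‖ ≤ (1 + β) ‖u - u_n‖`. Finally `P_n → id` pointwise is uniform on the compact
trajectory `u(J)` by Banach–Steinhaus, so `‖u - P_n u‖_{C(J,X)} → 0`.
-/

open Filter Set Topology

theorem HasDerivWithinAt.eventually_right_slope_norm_lt {E : Type*} [NormedAddCommGroup E]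
    [NormedSpace ℝ E] {f : ℝ → E} {f' : E} {x r : ℝ} (hf : HasDerivWithinAt f f' (Ici x) x)
    (hr : ‖f x + f'‖ - ‖f x‖ < r) :
    ∀ᶠ z in 𝓝[>] x, (z - x)⁻¹ * (‖f z‖ - ‖f x‖) < r := by
  have hslope : Tendsto (slope f x) (𝓝[>] x) (𝓝 f') :=
    (hasDerivWithinAt_iff_tendsto_slope' (lt_irrefl x)).mp hf.Ioi_of_Ici
  have hclose : ∀ᶠ z in 𝓝[>] x, ‖slope f x z - f'‖ < r - (‖f x + f'‖ - ‖f x‖) := by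
    simpa only [dist_eq_norm] using Metric.tendsto_nhds.mp hslope _ (sub_pos.mpr hr)
  filter_upwards [hclose, Ioo_mem_nhdsGT (lt_add_one x)] with z hz ⟨hxz, hz1⟩
  set h := z - x
  have hh : 0 < h := sub_pos.mpr hxz
  -- `f z` is the convex combination `(1 - h) • f x + h • (f x + f')` up to `h • o(1)`.
  have hdecomp : f z = (1 - h) • f x + h • (f x + f') + h • (slope f x z - f') := by
    rw [slope_def_module, smul_sub, smul_smul, mul_inv_cancel₀ hh.ne', one_smul]
    module
  have hnorm : ‖f z‖ ≤ (1 - h) * ‖f x‖ + h * ‖f x + f'‖ + h * ‖slope f x z - f'‖ := by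
    rw [hdecomp]
    refine norm_add₃_le.trans (le_of_eq ?_)
    rw [norm_smul, norm_smul, norm_smul, Real.norm_of_nonneg (by linarith),
      Real.norm_of_nonneg hh.le]
  rw [inv_mul_lt_iff₀ hh]
  nlinarith [mul_lt_mul_of_pos_left hz hh]

theorem norm_le_gronwallBound_of_hasDerivWithinAt_neg_add {E : Type*} [NormedAddCommGroup E]
    [NormedSpace ℝ E] {f r : ℝ → E} {δ K ε a b : ℝ} (hf : ContinuousOn f (Icc a b))
    (hf' : ∀ x ∈ Ico a b, HasDerivWithinAt f (-f x + r x) (Ici x) x) (ha : ‖f a‖ ≤ δ)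
    (bound : ∀ x ∈ Ico a b, ‖r x‖ ≤ K * ‖f x‖ + ε) :
    ∀ x ∈ Icc a b, ‖f x‖ ≤ gronwallBound δ K ε (x - a) := by
  refine le_gronwallBound_of_liminf_deriv_right_le (f' := fun x => ‖r x‖ - ‖f x‖)
    (continuous_norm.comp_continuousOn hf) (fun x hx c hc => ?_) ha
    (fun x hx => by linarith [bound x hx, norm_nonneg (f x)])
  refine ((hf' x hx).eventually_right_slope_norm_lt ?_).frequently
  rwa [add_neg_cancel_left]

theorem gronwallBound_δ0_ε_mul (K D x : ℝ) :
    gronwallBound 0 K (K * D) x = D * (Real.exp (K * x) - 1) := by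
  rcases eq_or_ne K 0 with rfl | hK
  · simp [gronwallBound_K0]
  · simp only [gronwallBound_of_K_ne_0 hK, mul_div_cancel_left₀ D hK, zero_mul, zero_add]

theorem ContinuousLinearMap.apply_eq_self_of_hasDerivWithinAt_s12 {E : Type*} [NormedAddCommGroup E]
    [NormedSpace ℝ E] {P : E →L[ℝ] E} {f f' : ℝ → E} {a b : ℝ} (hf : ContinuousOn f (Icc a b))
    (hf' : ∀ x ∈ Ico a b, HasDerivWithinAt f (f' x) (Ici x) x)
    (hP : ∀ x ∈ Ico a b, P (f' x) = f' x) (ha : P (f a) = f a) :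
    ∀ x ∈ Icc a b, P (f x) = f x := by
  have hconst := constant_of_has_deriv_right_zero (f := fun x => P (f x) - f x)
    ((P.continuous.comp_continuousOn hf).sub hf) fun x hx => by
      have hderiv := (P.hasFDerivAt.comp_hasDerivWithinAt x (hf' x hx)).sub (hf' x hx)
      rwa [hP x hx, sub_self] at hderiv
  intro x hx
  simpa only [ha, sub_self, sub_eq_zero] using hconst x hx

theorem ContinuousLinearMap.tendstoUniformlyOn_of_tendsto_apply
    {E F : Type*} [NormedAddCommGroup E] [NormedSpace ℝ E] [CompleteSpace E]
    [NormedAddCommGroup F] [NormedSpace ℝ F] {g : ℕ → E →L[ℝ] F} {f : E → F}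
    (h : ∀ x, Tendsto (fun n => g n x) atTop (𝓝 (f x))) {K : Set E} (hK : IsCompact K) :
    TendstoUniformlyOn (fun n => g n) f atTop K := by
  have hg : Equicontinuous ((↑) ∘ g : ℕ → E → F) :=
    (PolynormableSpace.banach_steinhaus fun x => (h x).isVonNBounded_range ℝ).equicontinuous
  have H := (EquicontinuousOn.tendsto_uniformOnFun_iff_pi' (𝔖 := {K})
    (forall_eq.mpr hK) (forall_eq.mpr (hg.equicontinuousOn K)) atTop f).mpr
    (tendsto_pi_nhds.mpr fun x => h x)
  exact UniformOnFun.tendsto_iff_tendstoUniformlyOn.mp H K rfl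

section IntervalSup

variable {E : Type*} [NormedAddCommGroup E] {a b : ℝ}

theorem norm_le_iSup_norm_Icc {g : ℝ → E} (hg : ContinuousOn g (Icc a b)) {t : ℝ}
    (ht : t ∈ Icc a b) : ‖g t‖ ≤ ⨆ s : Icc a b, ‖g s‖ := by
  obtain ⟨C, hC⟩ := isCompact_Icc.exists_bound_of_continuousOn hg
  exact le_ciSup (f := fun s : Icc a b => ‖g s‖) ⟨C, forall_mem_range.mpr fun s => hC s s.2⟩
    ⟨t, ht⟩

theorem ContinuousLinearMap.tendsto_iSup_norm_sub_apply [NormedSpace ℝ E] [CompleteSpace E]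
    {g : ℕ → E →L[ℝ] E} (hg : ∀ x, Tendsto (fun n => g n x) atTop (𝓝 x)) {u : ℝ → E}
    (hu : ContinuousOn u (Icc a b)) :
    Tendsto (fun n => ⨆ t : Icc a b, ‖u t - g n (u t)‖) atTop (𝓝 0) := by
  have hunif := tendstoUniformlyOn_of_tendsto_apply hg (isCompact_Icc.image_of_continuousOn hu)
  refine Metric.tendsto_nhds.mpr fun ε hε => ?_
  filter_upwards [Metric.tendstoUniformlyOn_iff.mp hunif (ε / 2) (half_pos hε)] with n hn
  have hsup : ⨆ t : Icc a b, ‖u t - g n (u t)‖ ≤ ε / 2 :=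
    Real.iSup_le (fun t => by simpa [dist_eq_norm] using (hn _ (mem_image_of_mem u t.2)).le)
      (half_pos hε).le
  rw [Real.dist_0_eq_abs, abs_of_nonneg (Real.iSup_nonneg fun _ => norm_nonneg _)]
  exact hsup.trans_lt (half_lt_self hε)

end IntervalSup

section ProjectionComparison

variable {X : Type*} [NormedAddCommGroup X] [NormedSpace ℝ X] {Q : X →L[ℝ] X} {G : X → X}
  {K a b : ℝ} {u v : ℝ → X}

theorem iSup_norm_sub_le_exp_mul_iSup_norm_sub_proj (hab : a ≤ b) (hK : 0 ≤ K)
    (hG : ∀ x y, ‖G x - G y‖ ≤ K * ‖x - y‖) (hu : ContinuousOn u (Icc a b))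
    (hv : ContinuousOn v (Icc a b))
    (hderiv : ∀ t ∈ Ico a b, HasDerivWithinAt (fun s => Q (u s) - v s)
      (-(Q (u t) - v t) + (G (u t) - G (v t))) (Ici t) t)
    (h0 : Q (u a) = v a) :
    ⨆ t : Icc a b, ‖u t - v t‖ ≤ Real.exp (K * (b - a)) * ⨆ t : Icc a b, ‖u t - Q (u t)‖ := by
  have : Nonempty (Icc a b) := ⟨⟨a, left_mem_Icc.mpr hab⟩⟩
  set D := ⨆ t : Icc a b, ‖u t - Q (u t)‖
  have hD : ∀ t ∈ Icc a b, ‖u t - Q (u t)‖ ≤ D := fun t ht =>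
    norm_le_iSup_norm_Icc (hu.sub (Q.continuous.comp_continuousOn hu)) ht
  have hD0 : 0 ≤ D := Real.iSup_nonneg fun _ => norm_nonneg _
  have hw : ∀ t ∈ Icc a b, ‖Q (u t) - v t‖ ≤ D * (Real.exp (K * (t - a)) - 1) := by
    intro t ht
    rw [← gronwallBound_δ0_ε_mul]
    refine norm_le_gronwallBound_of_hasDerivWithinAt_neg_add
      ((Q.continuous.comp_continuousOn hu).sub hv) hderiv (by simp [h0]) (fun s hs => ?_) t ht
    calc ‖G (u s) - G (v s)‖ ≤ K * ‖u s - v s‖ := hG _ _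
      _ ≤ K * (D + ‖Q (u s) - v s‖) := by
        gcongr
        exact (norm_sub_le_norm_sub_add_norm_sub _ (Q (u s)) _).trans
          (add_le_add (hD s (Ico_subset_Icc_self hs)) le_rfl)
      _ = K * ‖Q (u s) - v s‖ + K * D := by ring
  refine ciSup_le fun ⟨t, ht⟩ => ?_
  calc ‖u t - v t‖ ≤ ‖u t - Q (u t)‖ + ‖Q (u t) - v t‖ := norm_sub_le_norm_sub_add_norm_sub _ _ _
    _ ≤ D + D * (Real.exp (K * (t - a)) - 1) := add_le_add (hD t ht) (hw t ht)
    _ = Real.exp (K * (t - a)) * D := by ring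
    _ ≤ Real.exp (K * (b - a)) * D := by gcongr; exact ht.2

theorem iSup_norm_sub_proj_le_mul_iSup_norm_sub (hab : a ≤ b) (hK : 0 ≤ K)
    (hG : ∀ x y, ‖G x - G y‖ ≤ K * ‖x - y‖) (hu : ContinuousOn u (Icc a b))
    (hv : ContinuousOn v (Icc a b))
    (hderiv : ∀ t ∈ Ico a b, HasDerivWithinAt (fun s => Q (u s) - v s)
      (-(Q (u t) - v t) + (G (u t) - G (v t))) (Ici t) t)
    (h0 : Q (u a) = v a) :
    ⨆ t : Icc a b, ‖u t - Q (u t)‖ ≤ (1 + K * (b - a)) * ⨆ t : Icc a b, ‖u t - v t‖ := by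
  have : Nonempty (Icc a b) := ⟨⟨a, left_mem_Icc.mpr hab⟩⟩
  set E := ⨆ t : Icc a b, ‖u t - v t‖
  have hE : ∀ t ∈ Icc a b, ‖u t - v t‖ ≤ E := fun t ht => norm_le_iSup_norm_Icc (hu.sub hv) ht
  have hE0 : 0 ≤ E := Real.iSup_nonneg fun _ => norm_nonneg _
  have hw : ∀ t ∈ Icc a b, ‖Q (u t) - v t‖ ≤ K * E * (t - a) := by
    intro t ht
    simpa [gronwallBound_K0] using norm_le_gronwallBound_of_hasDerivWithinAt_neg_add (δ := 0)
      (K := 0) (ε := K * E)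
      ((Q.continuous.comp_continuousOn hu).sub hv) hderiv (by simp [h0])
      (fun s hs => by
        simpa using (hG _ _).trans (mul_le_mul_of_nonneg_left (hE s (Ico_subset_Icc_self hs)) hK))
      t ht
  refine ciSup_le fun ⟨t, ht⟩ => ?_
  calc ‖u t - Q (u t)‖ ≤ ‖u t - v t‖ + ‖Q (u t) - v t‖ := by
        simpa only [norm_sub_rev (v t)] using norm_sub_le_norm_sub_add_norm_sub (u t) (v t) _
    _ ≤ E + K * E * (t - a) := add_le_add (hE t ht) (hw t ht)
    _ ≤ (1 + K * (b - a)) * E := by nlinarith [mul_nonneg hK hE0, ht.2]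

end ProjectionComparison

section NeuralField

variable {X : Type*} [NormedAddCommGroup X] [NormedSpace ℝ X] {W Q : X →L[ℝ] X} {F : X → X}
  {Lf : NNReal} {p : ℝ} {ξ : ℝ → X} {a b : ℝ} {u v : ℝ → X}

theorem hasDerivWithinAt_proj_sub_of_projected {s : Set ℝ} {t : ℝ}
    (hu : HasDerivWithinAt u (-u t + W (F (u t)) + ξ t) s t)
    (hv : HasDerivWithinAt v (Q (-v t + W (F (v t)) + ξ t)) s t) (hQv : Q (v t) = v t) :
    HasDerivWithinAt (fun s => Q (u s) - v s)
      (-(Q (u t) - v t) + (Q (W (F (u t))) - Q (W (F (v t))))) s t := by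
  have hvalue : Q (-u t + W (F (u t)) + ξ t) - Q (-v t + W (F (v t)) + ξ t) =
      -(Q (u t) - v t) + (Q (W (F (u t))) - Q (W (F (v t)))) := by
    simp only [map_add, map_neg, hQv]
    abel
  have hderiv := (Q.hasFDerivAt.comp_hasDerivWithinAt t hu).sub hv
  rwa [hvalue] at hderiv

theorem iSup_norm_sub_projected_comparison (hQ : Q.comp Q = Q) (hF : LipschitzWith Lf F)
    (hQW : ‖Q.comp W‖ ≤ p) (hab : a ≤ b)
    (hu : ∀ t ∈ Icc a b, HasDerivWithinAt u (-u t + W (F (u t)) + ξ t) (Icc a b) t)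
    (hv : ∀ t ∈ Icc a b, HasDerivWithinAt v (Q (-v t + W (F (v t)) + ξ t)) (Icc a b) t)
    (h0 : v a = Q (u a)) :
    ⨆ t : Icc a b, ‖u t - v t‖ ≤ Real.exp (p * Lf * (b - a)) * ⨆ t : Icc a b, ‖u t - Q (u t)‖ ∧
    ⨆ t : Icc a b, ‖u t - Q (u t)‖ ≤ (1 + p * Lf * (b - a)) * ⨆ t : Icc a b, ‖u t - v t‖ := by
  have hright : ∀ {f : ℝ → X} {f' : X} {t : ℝ}, t ∈ Ico a b →
      HasDerivWithinAt f f' (Icc a b) t → HasDerivWithinAt f f' (Ici t) t :=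
    fun ht hf => hf.mono_of_mem_nhdsWithin (Icc_mem_nhdsGE_of_mem ht)
  have hucont : ContinuousOn u (Icc a b) := fun t ht => (hu t ht).continuousWithinAt
  have hvcont : ContinuousOn v (Icc a b) := fun t ht => (hv t ht).continuousWithinAt
  have hQQ : ∀ x, Q (Q x) = Q x := fun x => by rw [← ContinuousLinearMap.comp_apply, hQ]
  have hfix : ∀ t ∈ Icc a b, Q (v t) = v t :=
    Q.apply_eq_self_of_hasDerivWithinAt_s12 hvcont
      (fun t ht => hright ht (hv t (Ico_subset_Icc_self ht))) (fun _ _ => hQQ _)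
      (by rw [h0, hQQ])
  have hp0 : 0 ≤ p := (norm_nonneg _).trans hQW
  have hK : 0 ≤ p * Lf := mul_nonneg hp0 Lf.coe_nonneg
  have hG : ∀ x y, ‖Q (W (F x)) - Q (W (F y))‖ ≤ p * Lf * ‖x - y‖ := fun x y =>
    calc ‖Q (W (F x)) - Q (W (F y))‖ = ‖(Q.comp W) (F x - F y)‖ := by simp
      _ ≤ p * (Lf * ‖x - y‖) :=
        ((Q.comp W).le_of_opNorm_le hQW _).trans
          (mul_le_mul_of_nonneg_left (hF.norm_sub_le x y) hp0)
      _ = p * Lf * ‖x - y‖ := by ring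
  have hderiv : ∀ t ∈ Ico a b, HasDerivWithinAt (fun s => Q (u s) - v s)
      (-(Q (u t) - v t) + (Q (W (F (u t))) - Q (W (F (v t))))) (Ici t) t :=
    fun t ht => hright ht <| hasDerivWithinAt_proj_sub_of_projected
      (hu t (Ico_subset_Icc_self ht)) (hv t (Ico_subset_Icc_self ht))
      (hfix t (Ico_subset_Icc_self ht))
  exact ⟨iSup_norm_sub_le_exp_mul_iSup_norm_sub_proj hab hK hG hucont hvcont hderiv h0.symm,
    iSup_norm_sub_proj_le_mul_iSup_norm_sub hab hK hG hucont hvcont hderiv h0.symm⟩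

end NeuralField

theorem projection_scheme_convergence_general
    {X : Type*} [NormedAddCommGroup X] [NormedSpace ℝ X] [CompleteSpace X]
    (W : X →L[ℝ] X)
    (F : X → X) (Lf : NNReal) (hFlip : LipschitzWith Lf F)
    (ξ : ℝ → X)
    (t₀ T : ℝ) (hT : 0 ≤ T) (u₀ : X)
    (P : ℕ → X →L[ℝ] X) (hidem : ∀ n, (P n).comp (P n) = P n)
    (p : ℝ) (n₀ : ℕ) (hp : ∀ n > n₀, ‖(P n).comp W‖ ≤ p)
    (hconv : ∀ v : X, Tendsto (fun n => P n v) atTop (nhds v))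
    (u : ℝ → X) (un : ℕ → ℝ → X)
    (hu0 : u t₀ = u₀) (hun0 : ∀ n, un n t₀ = P n u₀)
    (hu : ∀ t ∈ Set.Icc t₀ (t₀ + T),
      HasDerivWithinAt u (-u t + W (F (u t)) + ξ t) (Set.Icc t₀ (t₀ + T)) t)
    (hun : ∀ n, ∀ t ∈ Set.Icc t₀ (t₀ + T),
      HasDerivWithinAt (un n) (P n (-un n t + W (F (un n t)) + ξ t))
        (Set.Icc t₀ (t₀ + T)) t) :
    Tendsto (fun n => ⨆ t : Set.Icc t₀ (t₀ + T), ‖u t - un n t‖) atTop (nhds 0) ∧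
    ∀ n > n₀,
      (1 + p * T * Lf)⁻¹ * (⨆ t : Set.Icc t₀ (t₀ + T), ‖u t - P n (u t)‖) ≤
        (⨆ t : Set.Icc t₀ (t₀ + T), ‖u t - un n t‖) ∧
      (⨆ t : Set.Icc t₀ (t₀ + T), ‖u t - un n t‖) ≤
        Real.exp (p * T * Lf) * (⨆ t : Set.Icc t₀ (t₀ + T), ‖u t - P n (u t)‖) := by
  have hcomparison := fun n (hn : n > n₀) =>
    iSup_norm_sub_projected_comparison (hidem n) hFlip (hp n hn) (le_add_of_nonneg_right hT)
      hu (hun n) (by rw [hun0, hu0])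
  have hβ : p * Lf * (t₀ + T - t₀) = p * T * Lf := by ring
  have hp0 : 0 ≤ p := (norm_nonneg _).trans (hp (n₀ + 1) n₀.lt_succ_self)
  have hucont : ContinuousOn u (Icc t₀ (t₀ + T)) := fun t ht => (hu t ht).continuousWithinAt
  refine ⟨squeeze_zero' (Eventually.of_forall fun n => Real.iSup_nonneg fun _ => norm_nonneg _)
      ((eventually_gt_atTop n₀).mono fun n hn => hβ ▸ (hcomparison n hn).1) ?_,
    fun n hn => ⟨?_, hβ ▸ (hcomparison n hn).1⟩⟩
  · simpa using (ContinuousLinearMap.tendsto_iSup_norm_sub_apply hconv hucont).const_mul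
      (Real.exp (p * T * Lf))
  · rw [inv_mul_le_iff₀ (by positivity), ← hβ]
    exact (hcomparison n hn).2

/-- If `‖P_n W‖ ≤ p` eventually and `P_n v → v` for all `v`, the projected solutions
converge to the solution in `C(J,X)`, and `‖u - u_n‖_{C(J,X)}` and
`‖u - P_n u‖_{C(J,X)}` converge to `0` at exactly the same speed:
`(1+β)⁻¹ ‖u - P_n u‖ ≤ ‖u - u_n‖ ≤ e^β ‖u - P_n u‖` with `β = pT‖f'‖_∞`. -/
theorem projection_scheme_convergence
    {X : Type*} [NormedAddCommGroup X] [NormedSpace ℝ X] [CompleteSpace X]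
    (W : X →L[ℝ] X) (hWc : IsCompactOperator W)
    (F : X → X) (Lf : NNReal) (hFlip : LipschitzWith Lf F)
    (ξ : ℝ → X) (hξ : Continuous ξ)
    (t₀ T : ℝ) (hT : 0 ≤ T) (u₀ : X)
    (P : ℕ → X →L[ℝ] X) (hidem : ∀ n, (P n).comp (P n) = P n)
    (p : ℝ) (n₀ : ℕ) (hp : ∀ n > n₀, ‖(P n).comp W‖ ≤ p)
    (hconv : ∀ v : X, Tendsto (fun n => P n v) atTop (nhds v))
    (u : ℝ → X) (un : ℕ → ℝ → X)
    (hu0 : u t₀ = u₀) (hun0 : ∀ n, un n t₀ = P n u₀)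
    (hu : ∀ t ∈ Set.Icc t₀ (t₀ + T),
      HasDerivWithinAt u (-u t + W (F (u t)) + ξ t) (Set.Icc t₀ (t₀ + T)) t)
    (hun : ∀ n, ∀ t ∈ Set.Icc t₀ (t₀ + T),
      HasDerivWithinAt (un n) (P n (-un n t + W (F (un n t)) + ξ t))
        (Set.Icc t₀ (t₀ + T)) t) :
    Tendsto (fun n => ⨆ t : Set.Icc t₀ (t₀ + T), ‖u t - un n t‖) atTop (nhds 0) ∧
    ∀ n > n₀,
      (1 + p * T * Lf)⁻¹ * (⨆ t : Set.Icc t₀ (t₀ + T), ‖u t - P n (u t)‖) ≤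
        (⨆ t : Set.Icc t₀ (t₀ + T), ‖u t - un n t‖) ∧
      (⨆ t : Set.Icc t₀ (t₀ + T), ‖u t - un n t‖) ≤
        Real.exp (p * T * Lf) * (⨆ t : Set.Icc t₀ (t₀ + T), ‖u t - P n (u t)‖) :=
  projection_scheme_convergence_general W F Lf hFlip ξ t₀ T hT u₀ P hidem p n₀ hp hconv u un hu0
    hun0 hu hun
end

section
/- Conversely, if ‖P_n W‖ ≤ p for n > n₀ and there exists z₀ ∈ X such that P_n z₀ does not converge to z₀, then there exist solutions z of the neural field problem and z_n of the projected problem (with initial data z₀ and P_n z₀, respectively) such that z_n − z does not converge to 0 in C(J, X). -/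
/-!
The right-hand side `N(t, u) = -u + W F(u) + ξ(t)` is globally Lipschitz in `u`, uniformly in `t`,
and so is `P_n N(t, u)`. Hence the full and the projected problems both have solutions on the
whole interval `J = [t₀, t₀ + T]`, obtained by applying Picard–Lindelöf on steps of a fixed length
and gluing. At `t = t₀` the two solutions differ by `z₀ - P_n z₀`, so the sup-norm error on `J`
dominates `‖z₀ - P_n z₀‖`, which does not tend to zero.
-/

open Filter Set
open scoped NNReal

section IntegralCurve

variable {E : Type*} [NormedAddCommGroup E] [NormedSpace ℝ E] {γ γ' : ℝ → E} {v : ℝ → E → E}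
  {s u : Set ℝ}

lemma IsIntegralCurveOn.congr (h : IsIntegralCurveOn γ v s) (hγ : EqOn γ' γ s) :
    IsIntegralCurveOn γ' v s := fun t ht => by
  simpa only [hγ ht] using (h t ht).congr_of_mem hγ ht

lemma IsIntegralCurveOn.union_of_isClosed (hs : IsClosed s) (hu : IsClosed u)
    (hγs : IsIntegralCurveOn γ v s) (hγu : IsIntegralCurveOn γ v u) :
    IsIntegralCurveOn γ v (s ∪ u) := by
  -- Outside a closed set every derivative within it holds vacuously.
  have extend : ∀ {s : Set ℝ}, IsClosed s → IsIntegralCurveOn γ v s →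
      ∀ t, HasDerivWithinAt γ (v t (γ t)) s t := fun {s} hs hγ t => by
    by_cases ht : t ∈ s
    · exact hγ t ht
    · exact HasFDerivWithinAt.of_notMem_closure (hs.closure_eq.symm ▸ ht)
  exact fun t _ => (extend hs hγs t).union (extend hu hγu t)

lemma IsIntegralCurveOn.Icc_piecewise {γ₁ γ₂ : ℝ → E} {a b c : ℝ} (hac : a ≤ c) (hcb : c ≤ b)
    (hγ₁ : IsIntegralCurveOn γ₁ v (Icc a c)) (hγ₂ : IsIntegralCurveOn γ₂ v (Icc c b))
    (hc : γ₁ c = γ₂ c) :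
    IsIntegralCurveOn (fun t => if t ≤ c then γ₁ t else γ₂ t) v (Icc a b) := by
  rw [← Icc_union_Icc_eq_Icc hac hcb]
  refine (hγ₁.congr fun t ht => if_pos ht.2).union_of_isClosed isClosed_Icc isClosed_Icc
    (hγ₂.congr fun t ht => ?_)
  rcases ht.1.eq_or_lt with rfl | hlt
  · simp [hc]
  · exact if_neg hlt.not_ge

end IntegralCurve

section Lipschitz

variable {E : Type*} [NormedAddCommGroup E] [NormedSpace ℝ E] [CompleteSpace E]
  {v : ℝ → E → E} {K : ℝ≥0}

/-- On a ball of radius `R = 2 M h` around `x₀` the field is bounded by `M + K R`, and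
`K h ≤ 1/2` makes `(M + K R) h ≤ R`, so the Picard–Lindelöf theorem applies on `[a, a + h]`. -/
lemma exists_isIntegralCurveOn_Icc_of_lipschitzWith_of_mul_le (hl : ∀ t, LipschitzWith K (v t))
    (hc : ∀ x, Continuous (v · x)) (a : ℝ) {h : ℝ} (hh : 0 ≤ h) (hKh : K * h ≤ 1 / 2) (x₀ : E) :
    ∃ γ : ℝ → E, γ a = x₀ ∧ IsIntegralCurveOn γ v (Icc a (a + h)) := by
  obtain ⟨C, hC⟩ := isCompact_Icc.exists_bound_of_continuousOn (hc x₀).continuousOn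
    (s := Icc a (a + h))
  set M : ℝ≥0 := C.toNNReal
  set R : ℝ≥0 := ⟨2 * M * h, by positivity⟩
  have hpl : IsPicardLindelof v (⟨a, left_mem_Icc.2 (by linarith)⟩ : Icc a (a + h)) x₀ R 0
      (M + K * R) K := by
    refine ⟨fun t _ => (hl t).lipschitzOnWith, fun x _ => (hc x).continuousOn, ?_, ?_⟩
    · intro t ht x hx
      have hx₀ : ‖v t x₀‖ ≤ M := (hC t ht).trans (Real.le_coe_toNNReal C)
      have hx : ‖v t x - v t x₀‖ ≤ K * R := by
        rw [← dist_eq_norm]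
        exact (hl t).dist_le_mul_of_le (Metric.mem_closedBall.1 hx)
      calc ‖v t x‖ ≤ ‖v t x₀‖ + ‖v t x - v t x₀‖ := norm_le_insert' _ _
        _ ≤ M + K * R := by linarith
    · have hmax : max (a + h - a) (a - a) = h := by simp [hh]
      have hR : (R : ℝ) = 2 * M * h := rfl
      simp only [hmax, hR, NNReal.coe_add, NNReal.coe_mul, NNReal.coe_zero, sub_zero]
      nlinarith [M.coe_nonneg, mul_nonneg (mul_nonneg M.coe_nonneg hh) hh]
  exact hpl.exists_eq_forall_mem_Icc_hasDerivWithinAt₀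

lemma exists_isIntegralCurveOn_Icc_of_lipschitzWith (hl : ∀ t, LipschitzWith K (v t))
    (hc : ∀ x, Continuous (v · x)) (a b : ℝ) (x₀ : E) :
    ∃ γ : ℝ → E, γ a = x₀ ∧ IsIntegralCurveOn γ v (Icc a b) := by
  set h : ℝ := (2 * (K + 1))⁻¹
  have hh : 0 < h := by positivity
  have hKh : K * h ≤ 1 / 2 := by
    rw [mul_inv_le_iff₀ (by positivity)]
    linarith
  have steps : ∀ (n : ℕ) (a : ℝ) (x₀ : E),
      ∃ γ : ℝ → E, γ a = x₀ ∧ IsIntegralCurveOn γ v (Icc a (a + (n + 1) * h)) := by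
    intro n
    induction n with
    | zero =>
      simpa using (exists_isIntegralCurveOn_Icc_of_lipschitzWith_of_mul_le hl hc · hh.le hKh)
    | succ n ih =>
      intro a x₀
      obtain ⟨γ₁, hγ₁a, hγ₁⟩ := exists_isIntegralCurveOn_Icc_of_lipschitzWith_of_mul_le hl hc
        a hh.le hKh x₀
      obtain ⟨γ₂, hγ₂a, hγ₂⟩ := ih (a + h) (γ₁ (a + h))
      have hend : a + h + (n + 1) * h = a + ((n + 1 : ℕ) + 1) * h := by push_cast; ring
      rw [hend] at hγ₂
      exact ⟨_, if_pos (by linarith) |>.trans hγ₁a,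
        hγ₁.Icc_piecewise (by linarith) (hend ▸ by nlinarith) hγ₂ hγ₂a.symm⟩
  obtain ⟨n, hn⟩ := exists_nat_ge ((b - a) / h)
  obtain ⟨γ, hγa, hγ⟩ := steps n a x₀
  refine ⟨γ, hγa, hγ.mono (Icc_subset_Icc_right ?_)⟩
  rw [div_le_iff₀ hh] at hn
  nlinarith

end Lipschitz

lemma IsCompact.le_ciSup_of_continuousOn {α β : Type*} [TopologicalSpace α]
    [ConditionallyCompleteLinearOrder β] [TopologicalSpace β] [ClosedIciTopology β]
    {s : Set α} {f : α → β} (hs : IsCompact s) (hf : ContinuousOn f s) {x : α} (hx : x ∈ s) :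
    f x ≤ ⨆ y : s, f y :=
  haveI : Nonempty β := ⟨f x⟩
  le_ciSup (f := fun y : s => f y) (by simpa only [image_eq_range] using hs.bddAbove_image hf)
    ⟨x, hx⟩

section NeuralField

variable {X : Type*} [NormedAddCommGroup X] [NormedSpace ℝ X]

def neuralField (W : X →L[ℝ] X) (F : X → X) (ξ : ℝ → X) (t : ℝ) (u : X) : X :=
  -u + W (F u) + ξ t

lemma lipschitzWith_neuralField (W : X →L[ℝ] X) {F : X → X} {Lf : ℝ≥0}
    (hF : LipschitzWith Lf F) (ξ : ℝ → X) (t : ℝ) :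
    LipschitzWith (1 + ‖W‖₊ * Lf) (neuralField W F ξ t) := by
  unfold neuralField
  simpa using (LipschitzWith.id.neg.add (W.lipschitz.comp hF)).add (LipschitzWith.const (ξ t))

lemma continuous_neuralField_apply (W : X →L[ℝ] X) (F : X → X) {ξ : ℝ → X} (hξ : Continuous ξ)
    (u : X) : Continuous (neuralField W F ξ · u) :=
  continuous_const.add hξ

end NeuralField

theorem projection_scheme_nonconvergence_general
    {X : Type*} [NormedAddCommGroup X] [NormedSpace ℝ X] [CompleteSpace X]
    (W : X →L[ℝ] X)
    (F : X → X) (Lf : NNReal) (hFlip : LipschitzWith Lf F)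
    (ξ : ℝ → X) (hξ : Continuous ξ)
    (t₀ T : ℝ) (hT : 0 < T)
    (P : ℕ → X →L[ℝ] X)
    (z₀ : X) (hz₀ : ¬ Tendsto (fun n => P n z₀) atTop (nhds z₀)) :
    ∃ (z : ℝ → X) (zn : ℕ → ℝ → X),
      (z t₀ = z₀ ∧ ∀ t ∈ Set.Icc t₀ (t₀ + T),
        HasDerivWithinAt z (-z t + W (F (z t)) + ξ t) (Set.Icc t₀ (t₀ + T)) t) ∧
      (∀ n, zn n t₀ = P n z₀ ∧ ∀ t ∈ Set.Icc t₀ (t₀ + T),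
        HasDerivWithinAt (zn n) (P n (-zn n t + W (F (zn n t)) + ξ t))
          (Set.Icc t₀ (t₀ + T)) t) ∧
      ¬ Tendsto (fun n => ⨆ t : Set.Icc t₀ (t₀ + T), ‖z t - zn n t‖)
          atTop (nhds 0) := by
  have hN := lipschitzWith_neuralField W hFlip ξ
  have hNc := continuous_neuralField_apply W F hξ
  obtain ⟨z, hz_init, hz⟩ := exists_isIntegralCurveOn_Icc_of_lipschitzWith hN hNc t₀ (t₀ + T) z₀
  choose zn hzn_init hzn using fun n => exists_isIntegralCurveOn_Icc_of_lipschitzWith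
    (fun t => (P n).lipschitz.comp (hN t)) (fun u => (P n).continuous.comp (hNc u))
    t₀ (t₀ + T) (P n z₀)
  refine ⟨z, zn, ⟨hz_init, hz⟩, fun n => ⟨hzn_init n, hzn n⟩, fun hsup => hz₀ ?_⟩
  rw [tendsto_iff_norm_sub_tendsto_zero]
  refine squeeze_zero (fun n => norm_nonneg _) (fun n => ?_) hsup
  simpa [hz_init, hzn_init n, norm_sub_rev] using isCompact_Icc.le_ciSup_of_continuousOn
    (hz.continuousOn.sub (hzn n).continuousOn).norm (left_mem_Icc.2 (by linarith : t₀ ≤ t₀ + T))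

/-- If `‖P_n W‖ ≤ p` eventually and `P_n z₀` does not converge to `z₀` for some
`z₀ ∈ X`, then there exist solutions `z` of the neural field problem and `z_n` of
the projected problems (with initial data `z₀` and `P_n z₀`) such that `z_n - z`
does not converge to `0` in `C(J,X)`. -/
theorem projection_scheme_nonconvergence
    {X : Type*} [NormedAddCommGroup X] [NormedSpace ℝ X] [CompleteSpace X]
    (W : X →L[ℝ] X) (hWc : IsCompactOperator W)
    (F : X → X) (Lf : NNReal) (hFlip : LipschitzWith Lf F)
    (ξ : ℝ → X) (hξ : Continuous ξ)
    (t₀ T : ℝ) (hT : 0 < T)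
    (P : ℕ → X →L[ℝ] X) (hidem : ∀ n, (P n).comp (P n) = P n)
    (p : ℝ) (n₀ : ℕ) (hp : ∀ n > n₀, ‖(P n).comp W‖ ≤ p)
    (z₀ : X) (hz₀ : ¬ Tendsto (fun n => P n z₀) atTop (nhds z₀)) :
    ∃ (z : ℝ → X) (zn : ℕ → ℝ → X),
      (z t₀ = z₀ ∧ ∀ t ∈ Set.Icc t₀ (t₀ + T),
        HasDerivWithinAt z (-z t + W (F (z t)) + ξ t) (Set.Icc t₀ (t₀ + T)) t) ∧
      (∀ n, zn n t₀ = P n z₀ ∧ ∀ t ∈ Set.Icc t₀ (t₀ + T),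
        HasDerivWithinAt (zn n) (P n (-zn n t + W (F (zn n t)) + ξ t))
          (Set.Icc t₀ (t₀ + T)) t) ∧
      ¬ Tendsto (fun n => ⨆ t : Set.Icc t₀ (t₀ + T), ‖z t - zn n t‖)
          atTop (nhds 0) :=
  projection_scheme_nonconvergence_general W F Lf hFlip ξ hξ t₀ T hT P z₀ hz₀
end

section
/- Combining the projection and time-stepping errors: under the standing hypotheses and u_n ∈ C²(J,X), the Forward Euler projection scheme satisfies max over nodes t_k ∈ [t₀, t₀+T] of ‖u(t_k) − U_n(t_k)‖ ≤ (e^{T L_n} − 1)/L_n · τ_n(h_t) + e^{β_n} ‖u − P_n u‖_{C(J,X)}, where β_n = T‖P_n W‖‖f'‖_∞, L_n = 1 + β_n/T, τ_n(h_t) = ‖u_n''‖_{C(J,X)} h_t/2. -/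
/-!
Split `u - U k` at the node `t₀ + k h` into `u - uₙ` and `uₙ - U k`, and write `κ = ‖P W‖ Lf`.

Since `uₙ` stays in the range of `P`, the difference `d = P u - uₙ` solves the damped equation
`d' = -d + P W (F u - F uₙ)` with forcing at most `κ (Mproj + ‖d‖)`; the integrating factor
`e^t` and a comparison argument give `‖d‖ ≤ Mproj (e^{κ (t - t₀)} - 1)`, hence
`‖u - uₙ‖ ≤ e^{κ T} Mproj`.

The Euler iterates also stay in the range of `P`, where the projected vector field is
`L`-Lipschitz with `L = 1 + κ`. One Euler step therefore multiplies the error by `1 + h L` and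
adds the Taylor remainder `M₂ h² / 2`; summing the geometric series and using
`(1 + h L)^k ≤ e^{k h L}` gives the first term of the bound.
-/

open Set Real

section

variable {E : Type*} [NormedAddCommGroup E] [NormedSpace ℝ E]

theorem norm_le_of_norm_deriv_le_mul_add_of_deriv_boundary {f f' : ℝ → E} {B B' φ : ℝ → ℝ}
    {K a b : ℝ} (hf : ContinuousOn f (Icc a b))
    (hf' : ∀ x ∈ Ico a b, HasDerivWithinAt f (f' x) (Ici x) x)
    (ha : ‖f a‖ ≤ B a) (hB : ∀ x, HasDerivAt B (B' x) x)
    (bound : ∀ x ∈ Ico a b, ‖f' x‖ ≤ K * ‖f x‖ + φ x)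
    (hBφ : ∀ x ∈ Ico a b, K * B x + φ x ≤ B' x) :
    ∀ x ∈ Icc a b, ‖f x‖ ≤ B x := by
  -- Fence with `B + ε e^{(K+1)(x-a)}`, whose growth beats the bound strictly, then let `ε → 0`.
  have fenced : ∀ ε > 0, ∀ x ∈ Icc a b, ‖f x‖ ≤ B x + ε * exp ((K + 1) * (x - a)) := by
    intro ε hε
    have hexp (x : ℝ) : HasDerivAt (fun y => exp ((K + 1) * (y - a)))
        (exp ((K + 1) * (x - a)) * (K + 1)) x := by
      simpa using (((hasDerivAt_id x).sub_const a).const_mul (K + 1)).exp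
    have ha' : ‖f a‖ ≤ B a + ε * exp ((K + 1) * (a - a)) := by
      simp only [sub_self, mul_zero, exp_zero, mul_one]
      linarith
    refine image_norm_le_of_norm_deriv_right_lt_deriv_boundary hf hf' ha'
      (fun x => (hB x).add ((hexp x).const_mul ε)) fun x hx hfx => ?_
    have hpos := exp_pos ((K + 1) * (x - a))
    calc ‖f' x‖ ≤ K * ‖f x‖ + φ x := bound x hx
      _ = K * B x + φ x + K * (ε * exp ((K + 1) * (x - a))) := by rw [hfx]; ring
      _ < B' x + ε * (exp ((K + 1) * (x - a)) * (K + 1)) := by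
        nlinarith [hBφ x hx, mul_pos hε hpos]
  intro x hx
  refine le_of_forall_pos_le_add fun δ hδ => ?_
  have hpos := exp_pos ((K + 1) * (x - a))
  simpa [div_mul_cancel₀ δ hpos.ne'] using fenced (δ / exp ((K + 1) * (x - a))) (by positivity) x hx

theorem norm_le_mul_exp_sub_one_of_hasDerivWithinAt_neg_add {d g : ℝ → E} {a b κ M : ℝ}
    (hκ : 0 ≤ κ) (hM : 0 ≤ M) (hd0 : d a = 0)
    (hd : ∀ t ∈ Icc a b, HasDerivWithinAt d (-d t + g t) (Icc a b) t)
    (hg : ∀ t ∈ Icc a b, ‖g t‖ ≤ κ * (M + ‖d t‖)) :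
    ∀ t ∈ Icc a b, ‖d t‖ ≤ M * (exp (κ * (t - a)) - 1) := by
  -- The integrating factor `e^{t-a}` removes the damping term.
  set h : ℝ → E := fun t => exp (t - a) • d t
  have hnorm (t : ℝ) : ‖h t‖ = exp (t - a) * ‖d t‖ := by
    simp [h, norm_smul, abs_of_pos (exp_pos _)]
  have hexp (t : ℝ) : HasDerivAt (fun s => exp (s - a)) (exp (t - a)) t := by
    simpa using ((hasDerivAt_id t).sub_const a).exp
  have hh : ∀ t ∈ Icc a b, HasDerivWithinAt h (exp (t - a) • g t) (Icc a b) t := by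
    intro t ht
    refine ((hexp t).hasDerivWithinAt.smul (hd t ht)).congr_deriv ?_
    rw [smul_add, smul_neg]
    abel
  -- `M (e^{(1+κ)s} - e^s)` is a supersolution of `B' = κ B + κ M e^s`, `B 0 = 0`.
  have hB (t : ℝ) : HasDerivAt (fun s => M * (exp ((1 + κ) * (s - a)) - exp (s - a)))
      (M * (exp ((1 + κ) * (t - a)) * (1 + κ) - exp (t - a))) t := by
    have := ((hasDerivAt_id t).sub_const a).const_mul (1 + κ)
    simp only [id, mul_one] at this
    exact (this.exp.sub (hexp t)).const_mul M
  have hbound := norm_le_of_norm_deriv_le_mul_add_of_deriv_boundary (K := κ)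
    (φ := fun t => κ * M * exp (t - a))
    (fun t ht => (hh t ht).continuousWithinAt)
    (fun t ht => (hh t (Ico_subset_Icc_self ht)).mono_of_mem_nhdsWithin (Icc_mem_nhdsGE_of_mem ht))
    (by simp [h, hd0]) hB ?_ ?_
  · intro t ht
    have hsplit : exp ((1 + κ) * (t - a)) = exp (t - a) * exp (κ * (t - a)) := by
      rw [← exp_add]; ring_nf
    refine le_of_mul_le_mul_left ?_ (exp_pos (t - a))
    calc exp (t - a) * ‖d t‖ = ‖h t‖ := (hnorm t).symm
      _ ≤ M * (exp ((1 + κ) * (t - a)) - exp (t - a)) := hbound t ht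
      _ = exp (t - a) * (M * (exp (κ * (t - a)) - 1)) := by rw [hsplit]; ring
  · intro t ht
    rw [norm_smul, norm_of_nonneg (exp_pos _).le]
    calc exp (t - a) * ‖g t‖ ≤ exp (t - a) * (κ * (M + ‖d t‖)) :=
          mul_le_mul_of_nonneg_left (hg t (Ico_subset_Icc_self ht)) (exp_pos _).le
      _ = κ * ‖h t‖ + κ * M * exp (t - a) := by rw [hnorm]; ring
  · intro t ht
    have : exp (t - a) ≤ exp ((1 + κ) * (t - a)) :=
      exp_le_exp.2 (by nlinarith [ht.1])
    nlinarith

theorem norm_sub_sub_smul_deriv_le {f f' f'' : ℝ → E} {a b M : ℝ}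
    (hf : ∀ t ∈ Icc a b, HasDerivWithinAt f (f' t) (Icc a b) t)
    (hf' : ∀ t ∈ Icc a b, HasDerivWithinAt f' (f'' t) (Icc a b) t)
    (hM : ∀ t ∈ Icc a b, ‖f'' t‖ ≤ M) :
    ∀ t ∈ Icc a b, ‖f t - f a - (t - a) • f' a‖ ≤ M * (t - a) ^ 2 / 2 := by
  set r : ℝ → E := fun t => f t - f a - (t - a) • f' a
  have hr : ∀ t ∈ Icc a b, HasDerivWithinAt r (f' t - f' a) (Icc a b) t := by
    intro t ht
    refine (((hf t ht).sub_const (f a)).sub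
      (((hasDerivAt_id t).sub_const a).smul_const (f' a)).hasDerivWithinAt).congr_deriv ?_
    simp
  have hr'_le : ∀ t ∈ Icc a b, ‖f' t - f' a‖ ≤ M * (t - a) :=
    norm_image_sub_le_of_norm_deriv_le_segment' hf' fun t ht => hM t (Ico_subset_Icc_self ht)
  have hB (t : ℝ) : HasDerivAt (fun s => M * (s - a) ^ 2 / 2) (M * (t - a)) t := by
    refine ((((hasDerivAt_id t).sub_const a).pow 2).const_mul M).div_const 2 |>.congr_deriv ?_
    simp only [id, Nat.cast_ofNat, mul_one]
    ring
  exact image_norm_le_of_norm_deriv_right_le_deriv_boundary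
    (fun t ht => (hr t ht).continuousWithinAt)
    (fun t ht => (hr t (Ico_subset_Icc_self ht)).mono_of_mem_nhdsWithin (Icc_mem_nhdsGE_of_mem ht))
    (by simp [r]) hB fun t ht => hr'_le t (Ico_subset_Icc_self ht)

theorem ContinuousLinearMap.map_eq_self_of_hasDerivWithinAt (P : E →L[ℝ] E) {f f' : ℝ → E}
    {a b : ℝ} (hf : ∀ t ∈ Icc a b, HasDerivWithinAt f (f' t) (Icc a b) t)
    (hf' : ∀ t ∈ Icc a b, P (f' t) = f' t) (ha : P (f a) = f a) :
    ∀ t ∈ Icc a b, P (f t) = f t := by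
  have hderiv : ∀ t ∈ Icc a b, HasDerivWithinAt (fun s => P (f s) - f s) 0 (Icc a b) t := by
    intro t ht
    refine ((P.hasFDerivAt.comp_hasDerivWithinAt t (hf t ht)).sub (hf t ht)).congr_deriv ?_
    simp [hf' t ht]
  intro t ht
  have := norm_image_sub_le_of_norm_deriv_le_segment' hderiv (fun _ _ => norm_zero.le) t ht
  rwa [ha, sub_self, sub_zero, zero_mul, norm_le_zero_iff, sub_eq_zero] at this

end

theorem le_geom_sum_mul_of_le_mul_add {e : ℕ → ℝ} {q c : ℝ} {n : ℕ} (hq : 0 ≤ q) (h0 : e 0 ≤ 0)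
    (hstep : ∀ k < n, e (k + 1) ≤ q * e k + c) :
    e n ≤ (∑ i ∈ Finset.range n, q ^ i) * c := by
  induction n with
  | zero => simpa using h0
  | succ n ih =>
    calc e (n + 1) ≤ q * e n + c := hstep n n.lt_succ_self
      _ ≤ q * ((∑ i ∈ Finset.range n, q ^ i) * c) + c := by
        gcongr
        exact ih fun k hk => hstep k (hk.trans n.lt_succ_self)
      _ = (∑ i ∈ Finset.range (n + 1), q ^ i) * c := by rw [geom_sum_succ]; ring

theorem one_add_pow_le_exp_mul {x : ℝ} (hx : -1 ≤ x) (n : ℕ) : (1 + x) ^ n ≤ exp (n * x) := by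
  rw [exp_nat_mul]
  exact pow_le_pow_left₀ (by linarith) (by linarith [add_one_le_exp x]) n

theorem ContinuousLinearMap.norm_map_sub_le_of_lipschitzWith {E F G : Type*}
    [SeminormedAddCommGroup E] [SeminormedAddCommGroup F] [NormedSpace ℝ F]
    [SeminormedAddCommGroup G] [NormedSpace ℝ G] (A : F →L[ℝ] G) {f : E → F} {K : NNReal}
    (hf : LipschitzWith K f) (x y : E) : ‖A (f x - f y)‖ ≤ ‖A‖ * K * ‖x - y‖ := by
  rw [mul_assoc]
  exact A.le_opNorm_of_le (hf.norm_sub_le x y)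

section NeuralField

variable {X : Type*} [NormedAddCommGroup X] [NormedSpace ℝ X] (P W : X →L[ℝ] X) {F : X → X}
  {Lf : NNReal} {ξ : ℝ → X} {a b : ℝ}

theorem projected_field_sub_projected_field (F : X → X) (x y z : X) (hy : P y = y) :
    P (-x + W (F x) + z) - P (-y + W (F y) + z) = -(P x - y) + (P.comp W) (F x - F y) := by
  simp only [map_add, map_neg, map_sub, ContinuousLinearMap.comp_apply, hy]
  abel

theorem norm_sub_projected_solution_le (hF : LipschitzWith Lf F)
    {u un : ℝ → X} {M : ℝ}
    (hu : ∀ t ∈ Icc a b, HasDerivWithinAt u (-u t + W (F (u t)) + ξ t) (Icc a b) t)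
    (hun : ∀ t ∈ Icc a b, HasDerivWithinAt un (P (-un t + W (F (un t)) + ξ t)) (Icc a b) t)
    (hPun : ∀ t ∈ Icc a b, P (un t) = un t) (ha : P (u a) = un a)
    (hM : ∀ t ∈ Icc a b, ‖u t - P (u t)‖ ≤ M) :
    ∀ t ∈ Icc a b, ‖u t - un t‖ ≤ exp (‖P.comp W‖ * Lf * (t - a)) * M := by
  intro t ht
  have hM0 : 0 ≤ M := (norm_nonneg _).trans (hM a ⟨le_rfl, ht.1.trans ht.2⟩)
  have hsplit (s : ℝ) : ‖u s - un s‖ ≤ ‖u s - P (u s)‖ + ‖P (u s) - un s‖ :=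
    norm_sub_le_norm_sub_add_norm_sub _ _ _
  have hd : ∀ s ∈ Icc a b, HasDerivWithinAt (fun r => P (u r) - un r)
      (-(P (u s) - un s) + (P.comp W) (F (u s) - F (un s))) (Icc a b) s := by
    intro s hs
    rw [← projected_field_sub_projected_field P W F _ _ (ξ s) (hPun s hs)]
    exact (P.hasFDerivAt.comp_hasDerivWithinAt s (hu s hs)).sub (hun s hs)
  have hg : ∀ s ∈ Icc a b,
      ‖(P.comp W) (F (u s) - F (un s))‖ ≤ ‖P.comp W‖ * Lf * (M + ‖P (u s) - un s‖) := by
    intro s hs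
    calc ‖(P.comp W) (F (u s) - F (un s))‖ ≤ ‖P.comp W‖ * Lf * ‖u s - un s‖ :=
          (P.comp W).norm_map_sub_le_of_lipschitzWith hF (u s) (un s)
      _ ≤ ‖P.comp W‖ * Lf * (M + ‖P (u s) - un s‖) := by
          gcongr
          linarith [hsplit s, hM s hs]
  have hd_le := norm_le_mul_exp_sub_one_of_hasDerivWithinAt_neg_add (by positivity) hM0
    (by simp [ha]) hd hg t ht
  linarith [hsplit t, hM t ht]

theorem norm_forward_euler_step_error_le (hF : LipschitzWith Lf F) {un un' un'' : ℝ → X} {M2 : ℝ}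
    (hun : ∀ t ∈ Icc a b, HasDerivWithinAt un (un' t) (Icc a b) t)
    (heq : ∀ t ∈ Icc a b, un' t = P (-un t + W (F (un t)) + ξ t))
    (hun' : ∀ t ∈ Icc a b, HasDerivWithinAt un' (un'' t) (Icc a b) t)
    (hM2 : ∀ t ∈ Icc a b, ‖un'' t‖ ≤ M2) (hPun : ∀ t ∈ Icc a b, P (un t) = un t)
    {h s : ℝ} (hh : 0 ≤ h) (hs : a ≤ s) (hsh : s + h ≤ b) {x : X} (hx : P x = x) :
    ‖un (s + h) - (x + h • P (-x + W (F x) + ξ s))‖ ≤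
      (1 + h * (1 + ‖P.comp W‖ * Lf)) * ‖un s - x‖ + M2 * h ^ 2 / 2 := by
  have hsub : Icc s b ⊆ Icc a b := Icc_subset_Icc_left hs
  have hsJ : s ∈ Icc a b := ⟨hs, by linarith⟩
  have htaylor := norm_sub_sub_smul_deriv_le (fun t ht => (hun t (hsub ht)).mono hsub)
    (fun t ht => (hun' t (hsub ht)).mono hsub) (fun t ht => hM2 t (hsub ht))
    (s + h) ⟨by linarith, hsh⟩
  rw [add_sub_cancel_left] at htaylor
  have hstab : ‖un' s - P (-x + W (F x) + ξ s)‖ ≤ (1 + ‖P.comp W‖ * Lf) * ‖un s - x‖ := by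
    rw [heq s hsJ, projected_field_sub_projected_field P W F _ _ _ hx, hPun s hsJ]
    calc ‖-(un s - x) + (P.comp W) (F (un s) - F x)‖
        ≤ ‖un s - x‖ + ‖(P.comp W) (F (un s) - F x)‖ := by
          rw [← norm_neg (un s - x)]
          exact norm_add_le _ _
      _ ≤ ‖un s - x‖ + ‖P.comp W‖ * Lf * ‖un s - x‖ := by
          gcongr
          exact (P.comp W).norm_map_sub_le_of_lipschitzWith hF (un s) x
      _ = (1 + ‖P.comp W‖ * Lf) * ‖un s - x‖ := by ring
  have hsplit : un (s + h) - (x + h • P (-x + W (F x) + ξ s)) =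
      (un s - x) + h • (un' s - P (-x + W (F x) + ξ s)) + (un (s + h) - un s - h • un' s) := by
    rw [smul_sub]; abel
  calc ‖un (s + h) - (x + h • P (-x + W (F x) + ξ s))‖
      ≤ ‖un s - x‖ + h * ‖un' s - P (-x + W (F x) + ξ s)‖ + ‖un (s + h) - un s - h • un' s‖ := by
        rw [hsplit]
        refine norm_add₃_le.trans_eq ?_
        rw [norm_smul, Real.norm_of_nonneg hh]
    _ ≤ ‖un s - x‖ + h * ((1 + ‖P.comp W‖ * Lf) * ‖un s - x‖) + M2 * h ^ 2 / 2 := by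
        gcongr
    _ = (1 + h * (1 + ‖P.comp W‖ * Lf)) * ‖un s - x‖ + M2 * h ^ 2 / 2 := by ring

theorem norm_forward_euler_error_le (hF : LipschitzWith Lf F) {un un' un'' : ℝ → X} {M2 : ℝ}
    (hun : ∀ t ∈ Icc a b, HasDerivWithinAt un (un' t) (Icc a b) t)
    (heq : ∀ t ∈ Icc a b, un' t = P (-un t + W (F (un t)) + ξ t))
    (hun' : ∀ t ∈ Icc a b, HasDerivWithinAt un' (un'' t) (Icc a b) t)
    (hM2 : ∀ t ∈ Icc a b, ‖un'' t‖ ≤ M2) (hPun : ∀ t ∈ Icc a b, P (un t) = un t)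
    {h : ℝ} (hh : 0 < h) {U : ℕ → X} (hU0 : U 0 = un a) (hPU : ∀ k, P (U k) = U k)
    (hU : ∀ k : ℕ, U (k + 1) = U k + h • P (-(U k) + W (F (U k)) + ξ (a + k * h))) :
    ∀ n : ℕ, a + n * h ≤ b → ‖un (a + n * h) - U n‖ ≤
      (exp (n * h * (1 + ‖P.comp W‖ * Lf)) - 1) / (1 + ‖P.comp W‖ * Lf) * (M2 * h / 2) := by
  intro n hn
  set L := 1 + ‖P.comp W‖ * Lf
  have hL : 0 < L := by positivity
  have haJ : a ∈ Icc a b := ⟨le_rfl, by nlinarith [n.cast_nonneg (α := ℝ)]⟩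
  have hM2₀ : 0 ≤ M2 := (norm_nonneg _).trans (hM2 a haJ)
  have hgeom := le_geom_sum_mul_of_le_mul_add (e := fun k => ‖un (a + k * h) - U k‖)
    (q := 1 + h * L) (c := M2 * h ^ 2 / 2) (n := n) (by positivity) (by simp [hU0]) ?_
  · rw [geom_sum_eq (by simp [hh.ne', hL.ne'])] at hgeom
    calc ‖un (a + n * h) - U n‖ ≤ ((1 + h * L) ^ n - 1) / (1 + h * L - 1) * (M2 * h ^ 2 / 2) :=
          hgeom
      _ = ((1 + h * L) ^ n - 1) / L * (M2 * h / 2) := by field_simp; ring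
      _ ≤ (exp (n * h * L) - 1) / L * (M2 * h / 2) := by
          gcongr
          have hhL : -1 ≤ h * L := by linarith [mul_pos hh hL]
          simpa [mul_assoc] using one_add_pow_le_exp_mul hhL n
  · intro k hk
    have hk' : a + k * h + h ≤ b := by
      have : ((k : ℝ) + 1) * h ≤ n * h := by gcongr; exact_mod_cast hk
      linarith
    have := norm_forward_euler_step_error_le P W hF hun heq hun' hM2 hPun hh.le
      (by nlinarith [k.cast_nonneg (α := ℝ)]) hk' (hPU k)
    simpa [hU k, add_mul, add_assoc] using this

end NeuralField

theorem forward_euler_projection_total_error_general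
    {X : Type*} [NormedAddCommGroup X] [NormedSpace ℝ X]
    (W : X →L[ℝ] X) (F : X → X) (Lf : NNReal) (hFlip : LipschitzWith Lf F)
    (ξ : ℝ → X)
    (t₀ T : ℝ) (u₀ : X)
    (P : X →L[ℝ] X) (hidem : P.comp P = P)
    (u : ℝ → X) (hu0 : u t₀ = u₀)
    (hu : ∀ t ∈ Set.Icc t₀ (t₀ + T),
      HasDerivWithinAt u (-u t + W (F (u t)) + ξ t) (Set.Icc t₀ (t₀ + T)) t)
    (Mproj : ℝ) (hMproj : ∀ t ∈ Set.Icc t₀ (t₀ + T), ‖u t - P (u t)‖ ≤ Mproj)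
    (un un' un'' : ℝ → X) (hun0 : un t₀ = P u₀)
    (hund : ∀ t ∈ Set.Icc t₀ (t₀ + T),
      HasDerivWithinAt un (un' t) (Set.Icc t₀ (t₀ + T)) t)
    (heq : ∀ t ∈ Set.Icc t₀ (t₀ + T), un' t = P (-un t + W (F (un t)) + ξ t))
    (hund' : ∀ t ∈ Set.Icc t₀ (t₀ + T),
      HasDerivWithinAt un' (un'' t) (Set.Icc t₀ (t₀ + T)) t)
    (M2 : ℝ) (hM2 : ∀ t ∈ Set.Icc t₀ (t₀ + T), ‖un'' t‖ ≤ M2)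
    (ht : ℝ) (hht : 0 < ht)
    (U : ℕ → X) (hU0 : U 0 = P u₀)
    (hUstep : ∀ k : ℕ,
      U (k + 1) = U k + ht • P (-(U k) + W (F (U k)) + ξ (t₀ + k * ht))) :
    ∀ k : ℕ, t₀ + k * ht ≤ t₀ + T →
      ‖u (t₀ + k * ht) - U k‖ ≤
        (Real.exp (T * (1 + ‖P.comp W‖ * Lf)) - 1) / (1 + ‖P.comp W‖ * Lf) *
          (M2 * ht / 2) +
        Real.exp (T * ‖P.comp W‖ * Lf) * Mproj := by
  intro k hk
  have hkT : k * ht ≤ T := by linarith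
  have hkJ : t₀ + k * ht ∈ Icc t₀ (t₀ + T) := ⟨by nlinarith [k.cast_nonneg (α := ℝ)], hk⟩
  have hPP (x : X) : P (P x) = P x := DFunLike.congr_fun hidem x
  have hPun := P.map_eq_self_of_hasDerivWithinAt hund (fun t ht => by rw [heq t ht, hPP])
    (by rw [hun0, hPP])
  have hPU (j : ℕ) : P (U j) = U j := by
    induction j with
    | zero => rw [hU0, hPP]
    | succ j ih => rw [hUstep, map_add, ih, map_smul, hPP]
  have hproj := norm_sub_projected_solution_le P W hFlip hu
    (fun t ht => heq t ht ▸ hund t ht) hPun (by rw [hu0, hun0]) hMproj _ hkJ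
  have heuler := norm_forward_euler_error_le P W hFlip hund heq hund' hM2 hPun hht
    (hU0.trans hun0.symm) hPU hUstep k hk
  have hMproj₀ : 0 ≤ Mproj := (norm_nonneg _).trans (hMproj _ hkJ)
  have hM2₀ : 0 ≤ M2 := (norm_nonneg _).trans (hM2 _ hkJ)
  rw [add_sub_cancel_left] at hproj
  calc ‖u (t₀ + k * ht) - U k‖
      ≤ ‖u (t₀ + k * ht) - un (t₀ + k * ht)‖ + ‖un (t₀ + k * ht) - U k‖ :=
        norm_sub_le_norm_sub_add_norm_sub _ _ _
    _ ≤ exp (‖P.comp W‖ * Lf * (k * ht)) * Mproj +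
          (exp (k * ht * (1 + ‖P.comp W‖ * Lf)) - 1) / (1 + ‖P.comp W‖ * Lf) * (M2 * ht / 2) :=
        add_le_add hproj heuler
    _ ≤ exp (T * ‖P.comp W‖ * Lf) * Mproj +
          (exp (T * (1 + ‖P.comp W‖ * Lf)) - 1) / (1 + ‖P.comp W‖ * Lf) * (M2 * ht / 2) := by
        have hκ : 0 ≤ ‖P.comp W‖ * (Lf : ℝ) := by positivity
        gcongr exp ?_ * _ + (exp ?_ - 1) / _ * _ <;> nlinarith
    _ = _ := add_comm _ _

/-- Combined Forward Euler + projection error: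
`max_k ‖u(t_k) - U_n(t_k)‖ ≤ (e^{T L_n} - 1)/L_n · τ_n(h_t) + e^{β_n} ‖u - P_n u‖_{C(J,X)}`
with `β_n = T‖P_n W‖‖f'‖_∞`, `L_n = 1 + β_n/T`, `τ_n(h_t) = ‖u_n''‖_{C(J,X)} h_t / 2`. -/
theorem forward_euler_projection_total_error
    {X : Type*} [NormedAddCommGroup X] [NormedSpace ℝ X] [CompleteSpace X]
    (W : X →L[ℝ] X) (F : X → X) (Lf : NNReal) (hFlip : LipschitzWith Lf F)
    (ξ : ℝ → X) (hξ : Continuous ξ)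
    (t₀ T : ℝ) (hT : 0 ≤ T) (u₀ : X)
    (P : X →L[ℝ] X) (hidem : P.comp P = P)
    (u : ℝ → X) (hu0 : u t₀ = u₀)
    (hu : ∀ t ∈ Set.Icc t₀ (t₀ + T),
      HasDerivWithinAt u (-u t + W (F (u t)) + ξ t) (Set.Icc t₀ (t₀ + T)) t)
    (Mproj : ℝ) (hMproj : ∀ t ∈ Set.Icc t₀ (t₀ + T), ‖u t - P (u t)‖ ≤ Mproj)
    (un un' un'' : ℝ → X) (hun0 : un t₀ = P u₀)
    (hund : ∀ t ∈ Set.Icc t₀ (t₀ + T),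
      HasDerivWithinAt un (un' t) (Set.Icc t₀ (t₀ + T)) t)
    (heq : ∀ t ∈ Set.Icc t₀ (t₀ + T), un' t = P (-un t + W (F (un t)) + ξ t))
    (hund' : ∀ t ∈ Set.Icc t₀ (t₀ + T),
      HasDerivWithinAt un' (un'' t) (Set.Icc t₀ (t₀ + T)) t)
    (M2 : ℝ) (hM2 : ∀ t ∈ Set.Icc t₀ (t₀ + T), ‖un'' t‖ ≤ M2)
    (ht : ℝ) (hht : 0 < ht)
    (U : ℕ → X) (hU0 : U 0 = P u₀)
    (hUstep : ∀ k : ℕ,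
      U (k + 1) = U k + ht • P (-(U k) + W (F (U k)) + ξ (t₀ + k * ht))) :
    ∀ k : ℕ, t₀ + k * ht ≤ t₀ + T →
      ‖u (t₀ + k * ht) - U k‖ ≤
        (Real.exp (T * (1 + ‖P.comp W‖ * Lf)) - 1) / (1 + ‖P.comp W‖ * Lf) *
          (M2 * ht / 2) +
        Real.exp (T * ‖P.comp W‖ * Lf) * Mproj :=
  forward_euler_projection_total_error_general W F Lf hFlip ξ t₀ T u₀ P hidem u hu0 hu Mproj hMproj
    un un' un'' hun0 hund heq hund' M2 hM2 ht hht U hU0 hUstep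
end
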